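/- arXiv:gr-qc/0212055 — 2 statements merged into one kernel-verified Lean document; each statement's English description precedes it below -/
import Mathlib

section
/- Let ρ : ℝ² → ℝ be twice continuously differentiable and let L₁₂₁, L₁₂₂ : ℝ² → ℝ be continuously differentiable. Then the pair (L₁₂₁, L₁₂₂) satisfies both equations (E1) −e^{2ρ}∂₁∂₂ρ + 4L₁₂₁∂₂ρ − 4L₁₂₂∂₁ρ − 2∂₂L₁₂₁ + 2∂₁L₁₂₂ = 0 and (E2) 2L₁₂₁∂₂ρ + 2L₁₂₂∂₁ρ − ∂₂L₁₂₁ − ∂₁L₁₂₂ = 0 at every point of ℝ² if and only if there exist functions f₁, f₂ : ℝ → ℝ such that L₁₂₁(x¹,x²) = e^{2ρ(x¹,x²)} f₁(x¹) − (1/4) e^{2ρ(x¹,x²)} ∂₁ρ(x¹,x²) and L₁₂₂(x¹,x²) = e^{2ρ(x¹,x²)} f₂(x²) + (1/4) e^{2ρ(x¹,x²)} ∂₂ρ(x¹,x²) for all (x¹,x²) ∈ ℝ². (This is the general solution of the 2-dimensional Riemann-Lanczos problem with the differential gauge condition imposed: it depends on two arbitrary functions of one independent variable each.) -/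
/-!
Up to the factor `-e^{-2ρ}/2`, the combinations `E2 + E1/2` and `E2 - E1/2` of the two
equations are `∂₂(e^{-2ρ} L₁₂₁ + ∂₁ρ/4) = 0` and `∂₁(e^{-2ρ} L₁₂₂ - ∂₂ρ/4) = 0`, once
`∂₂∂₁ρ = ∂₁∂₂ρ` is used. A differentiable function on `ℝ²` whose partial derivative in one
variable vanishes depends on the other variable alone, and solving
`e^{-2ρ} L₁₂₁ + ∂₁ρ/4 = f₁(x¹)`, `e^{-2ρ} L₁₂₂ - ∂₂ρ/4 = f₂(x²)` for `L₁₂₁, L₁₂₂` gives the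
stated formulas.
-/

noncomputable def pd (i : Fin 2) (f : (Fin 2 → ℝ) → ℝ) : (Fin 2 → ℝ) → ℝ :=
  fun x => deriv (fun t => f (Function.update x i t)) (x i)

open Function Real

section PartialDerivative

variable {g : (Fin 2 → ℝ) → ℝ} {i : Fin 2} {x : Fin 2 → ℝ}

theorem pd_eq_fderiv (hg : DifferentiableAt ℝ g x) :
    pd i g x = fderiv ℝ g x (Pi.single i 1) := by
  rw [← update_eq_self i x] at hg
  have h := hg.hasFDerivAt.comp_hasDerivAt (x i) (hasDerivAt_update x i (x i))
  rw [update_eq_self] at h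
  exact h.deriv

theorem hasDerivAt_pd {t : ℝ} (hg : DifferentiableAt ℝ g (update x i t)) :
    HasDerivAt (fun s => g (update x i s)) (pd i g (update x i t)) t := by
  rw [pd_eq_fderiv hg]
  exact hg.hasFDerivAt.comp_hasDerivAt t (hasDerivAt_update x i t)

theorem hasDerivAt_pd_self (hg : DifferentiableAt ℝ g x) :
    HasDerivAt (fun s => g (update x i s)) (pd i g x) (x i) := by
  simpa using hasDerivAt_pd (x := x) (i := i) (t := x i) (by simpa using hg)

theorem contDiff_pd {m n : WithTop ℕ∞} (hg : ContDiff ℝ n g) (hmn : m + 1 ≤ n) :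
    ContDiff ℝ m (pd i g) := by
  have hd : Differentiable ℝ g := hg.differentiable (ne_bot_of_le_ne_bot (by simp) hmn)
  rw [show pd i g = fun x => fderiv ℝ g x (Pi.single i 1) from funext fun x => pd_eq_fderiv (hd x)]
  exact (hg.fderiv_right hmn).clm_apply contDiff_const

theorem differentiable_pd (hg : ContDiff ℝ 2 g) : Differentiable ℝ (pd i g) :=
  (contDiff_pd hg (by norm_num)).differentiable one_ne_zero

end PartialDerivative

theorem pd_pd_comm {g : (Fin 2 → ℝ) → ℝ} (hg : ContDiff ℝ 2 g) (i j : Fin 2) (x : Fin 2 → ℝ) :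
    pd i (pd j g) x = pd j (pd i g) x := by
  have hd : Differentiable ℝ g := hg.differentiable two_ne_zero
  have hd' : Differentiable ℝ (fderiv ℝ g) := (hg.fderiv_right le_rfl).differentiable one_ne_zero
  have second : ∀ k l,
      pd k (pd l g) x = fderiv ℝ (fderiv ℝ g) x (Pi.single k 1) (Pi.single l 1) := by
    intro k l
    have h := (hd' x).hasFDerivAt.clm_apply (hasFDerivAt_const (Pi.single l (1 : ℝ)) x)
    rw [show pd l g = fun y => fderiv ℝ g y (Pi.single l 1) from
      funext fun y => pd_eq_fderiv (hd y), pd_eq_fderiv h.differentiableAt, h.fderiv]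
    simp
  rw [second, second, hg.contDiffAt.isSymmSndFDerivAt (by simp)]

theorem forall_pd_eq_zero_iff {i j : Fin 2} (hij : i ≠ j) {M : (Fin 2 → ℝ) → ℝ}
    (hM : Differentiable ℝ M) : (∀ x, pd i M x = 0) ↔ ∃ f : ℝ → ℝ, ∀ x, M x = f (x j) := by
  constructor
  · intro h
    refine ⟨fun s => M (Pi.single j s), fun x => ?_⟩
    have hline : ∀ t, HasDerivAt (fun s => M (update x i s)) 0 t := fun t =>
      h (update x i t) ▸ hasDerivAt_pd (hM _)
    have hconst := is_const_of_deriv_eq_zero (fun t => (hline t).differentiableAt)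
      (fun t => (hline t).deriv) (x i) 0
    have hbase : update x i 0 = Pi.single j (x j) := by
      ext k
      fin_cases i <;> fin_cases j <;> fin_cases k <;> simp_all
    simpa [hbase] using hconst
  · rintro ⟨f, hf⟩ x
    simp [pd, hf, update_of_ne hij.symm]

theorem pd_exp_mul_add_const_mul {ρ L q : (Fin 2 → ℝ) → ℝ} {i : Fin 2} {x : Fin 2 → ℝ}
    (hρ : DifferentiableAt ℝ ρ x) (hL : DifferentiableAt ℝ L x) (hq : DifferentiableAt ℝ q x)
    (c : ℝ) :
    pd i (fun y => exp (-(2 * ρ y)) * L y + c * q y) x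
      = exp (-(2 * ρ x)) * (pd i L x - 2 * L x * pd i ρ x) + c * pd i q x := by
  have h := (((hasDerivAt_pd_self (i := i) hρ).const_mul 2).fun_neg.exp.fun_mul
    (hasDerivAt_pd_self hL)).fun_add ((hasDerivAt_pd_self hq).const_mul c)
  simp only [update_eq_self] at h
  exact h.deriv.trans (by ring)

theorem exp_neg_mul_add_eq_iff {a L c q f : ℝ} :
    exp (-a) * L + c * q = f ↔ L = exp a * f - c * exp a * q := by
  rw [exp_neg]
  constructor <;> intro h <;> subst h <;> field_simp <;> ring

theorem riemannLanczos_iff_pd_eq_zero {ρ L121 L122 : (Fin 2 → ℝ) → ℝ} (hρ : ContDiff ℝ 2 ρ)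
    (hL121 : Differentiable ℝ L121) (hL122 : Differentiable ℝ L122) :
    ((∀ x : Fin 2 → ℝ,
        -exp (2 * ρ x) * pd 0 (pd 1 ρ) x + 4 * L121 x * pd 1 ρ x
          - 4 * L122 x * pd 0 ρ x - 2 * pd 1 L121 x + 2 * pd 0 L122 x = 0) ∧
     (∀ x : Fin 2 → ℝ,
        2 * L121 x * pd 1 ρ x + 2 * L122 x * pd 0 ρ x
          - pd 1 L121 x - pd 0 L122 x = 0)) ↔
    (∀ x, pd 1 (fun y => exp (-(2 * ρ y)) * L121 y + 1 / 4 * pd 0 ρ y) x = 0) ∧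
    (∀ x, pd 0 (fun y => exp (-(2 * ρ y)) * L122 y + -(1 / 4) * pd 1 ρ y) x = 0) := by
  have hρd := hρ.differentiable two_ne_zero
  simp only [pd_exp_mul_add_const_mul (hρd _) (hL121 _) (differentiable_pd hρ _),
    pd_exp_mul_add_const_mul (hρd _) (hL122 _) (differentiable_pd hρ _), pd_pd_comm hρ 1 0,
    ← forall_and]
  refine forall_congr' fun x => ?_
  have hexp : exp (-(2 * ρ x)) * exp (2 * ρ x) = 1 := by rw [← exp_add]; simp
  constructor
  · rintro ⟨h1, h2⟩
    constructor
    · linear_combination exp (-(2 * ρ x)) * (-h1 / 4 - h2 / 2) - pd 0 (pd 1 ρ) x / 4 * hexp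
    · linear_combination exp (-(2 * ρ x)) * (h1 / 4 - h2 / 2) + pd 0 (pd 1 ρ) x / 4 * hexp
  · rintro ⟨h1, h2⟩
    constructor
    · linear_combination 2 * exp (2 * ρ x) * (h2 - h1)
        + 2 * (pd 1 L121 x - 2 * L121 x * pd 1 ρ x - (pd 0 L122 x - 2 * L122 x * pd 0 ρ x)) * hexp
    · linear_combination -exp (2 * ρ x) * (h1 + h2)
        + (pd 1 L121 x - 2 * L121 x * pd 1 ρ x + (pd 0 L122 x - 2 * L122 x * pd 0 ρ x)) * hexp

/-- General solution of the 2-dimensional Riemann-Lanczos problem with the differential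
gauge condition imposed, in the characteristic coordinates of `ds² = −e^{2ρ} dx¹ dx²`:
`(L₁₂₁, L₁₂₂)` solves (E1) and (E2) everywhere iff
`L₁₂₁ = e^{2ρ} f₁(x¹) − (1/4) e^{2ρ} ∂₁ρ` and `L₁₂₂ = e^{2ρ} f₂(x²) + (1/4) e^{2ρ} ∂₂ρ`
for some functions `f₁, f₂ : ℝ → ℝ`.  Coordinate `xⁱ` corresponds to index `i - 1 : Fin 2`. -/
theorem riemann_lanczos_2d_general_solution
    (ρ L121 L122 : (Fin 2 → ℝ) → ℝ)
    (hρ : ContDiff ℝ 2 ρ) (hL121 : ContDiff ℝ 1 L121) (hL122 : ContDiff ℝ 1 L122) :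
    ((∀ x : Fin 2 → ℝ,
        -Real.exp (2 * ρ x) * pd 0 (pd 1 ρ) x + 4 * L121 x * pd 1 ρ x
          - 4 * L122 x * pd 0 ρ x - 2 * pd 1 L121 x + 2 * pd 0 L122 x = 0) ∧
     (∀ x : Fin 2 → ℝ,
        2 * L121 x * pd 1 ρ x + 2 * L122 x * pd 0 ρ x
          - pd 1 L121 x - pd 0 L122 x = 0)) ↔
    (∃ f₁ f₂ : ℝ → ℝ, ∀ x : Fin 2 → ℝ,
        L121 x = Real.exp (2 * ρ x) * f₁ (x 0)
          - (1/4) * Real.exp (2 * ρ x) * pd 0 ρ x ∧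
        L122 x = Real.exp (2 * ρ x) * f₂ (x 1)
          + (1/4) * Real.exp (2 * ρ x) * pd 1 ρ x) := by
  have hρd := hρ.differentiable two_ne_zero
  have hL121d := hL121.differentiable one_ne_zero
  have hL122d := hL122.differentiable one_ne_zero
  have hM₁ : Differentiable ℝ fun y => exp (-(2 * ρ y)) * L121 y + 1 / 4 * pd 0 ρ y := by
    have := differentiable_pd (i := 0) hρ; fun_prop
  have hM₂ : Differentiable ℝ fun y => exp (-(2 * ρ y)) * L122 y + -(1 / 4) * pd 1 ρ y := by
    have := differentiable_pd (i := 1) hρ; fun_prop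
  rw [riemannLanczos_iff_pd_eq_zero hρ hL121d hL122d, forall_pd_eq_zero_iff one_ne_zero hM₁,
    forall_pd_eq_zero_iff zero_ne_one hM₂]
  simp only [exp_neg_mul_add_eq_iff]
  simp only [neg_mul, sub_neg_eq_add, forall_and, exists_and_left, exists_and_right]
end

section
/- Let ρ : ℝ² → ℝ be twice continuously differentiable and let L₁₂₂ : ℝ² → ℝ be any continuously differentiable function. Then there exists a function L₁₂₁ : ℝ² → ℝ, differentiable with respect to x², such that at every point of ℝ² the single Riemann-Lanczos equation (E1) −e^{2ρ}∂₁∂₂ρ + 4L₁₂₁∂₂ρ − 4L₁₂₂∂₁ρ − 2∂₂L₁₂₁ + 2∂₁L₁₂₂ = 0 holds. (This reflects that without the differential gauge condition the 2-dimensional Riemann-Lanczos problem is in involution and its general solution contains one arbitrary function of the two independent variables.) -/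
/-!
With `x¹` as a parameter, (E1) is a linear first-order ODE in `x²` for `L₁₂₁`:
`∂₂L₁₂₁ = 2 ∂₂ρ · L₁₂₁ + c` with `c` continuous (`∂ᵢ` is `pd (i - 1)`). The integrating
factor `e^{-2ρ}` solves it explicitly: `L₁₂₁ = e^{2ρ} ∫₀^{x²} e^{-2ρ} c`.
-/

open Function Real

lemma hasDerivAt_update_pd {f : (Fin 2 → ℝ) → ℝ} (hf : Differentiable ℝ f) (i : Fin 2)
    (x : Fin 2 → ℝ) (t : ℝ) :
    HasDerivAt (fun s => f (update x i s)) (pd i f (update x i t)) t := by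
  have hd : DifferentiableAt ℝ (fun s => f (update x i s)) t :=
    (hf _).comp t (hasDerivAt_update x i t).differentiableAt
  simpa [pd] using hd.hasDerivAt

lemma pd_eq_fderiv_s6 {f : (Fin 2 → ℝ) → ℝ} (hf : Differentiable ℝ f) (i : Fin 2) (x : Fin 2 → ℝ) :
    pd i f x = fderiv ℝ f x (Pi.single i 1) := by
  have h := (hf _).hasFDerivAt.comp_hasDerivAt (x i) (hasDerivAt_update x i (x i))
  rw [update_eq_self] at h
  exact h.deriv

lemma contDiff_pd_s6 {n : WithTop ℕ∞} {f : (Fin 2 → ℝ) → ℝ} (hf : ContDiff ℝ (n + 1) f)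
    (i : Fin 2) : ContDiff ℝ n (pd i f) := by
  have hfd : Differentiable ℝ f := hf.differentiable (by simp)
  rw [show pd i f = fun x => fderiv ℝ f x (Pi.single i 1) from funext (pd_eq_fderiv_s6 hfd i)]
  exact (hf.fderiv_right le_rfl).clm_apply contDiff_const

lemma continuous_pd {f : (Fin 2 → ℝ) → ℝ} (hf : ContDiff ℝ 1 f) (i : Fin 2) :
    Continuous (pd i f) :=
  (contDiff_pd_s6 (n := 0) (by simpa using hf) i).continuous

lemma hasDerivAt_exp_mul_integral {φ φ' b : ℝ → ℝ} (hφ : ∀ t, HasDerivAt φ (φ' t) t)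
    (hb : Continuous b) (a t : ℝ) :
    HasDerivAt (fun t => exp (φ t) * ∫ s in a..t, exp (-φ s) * b s)
      (φ' t * (exp (φ t) * ∫ s in a..t, exp (-φ s) * b s) + b t) t := by
  have hφc : Continuous φ := continuous_iff_continuousAt.2 fun t => (hφ t).continuousAt
  have hI : HasDerivAt (fun u => ∫ s in a..u, exp (-φ s) * b s) (exp (-φ t) * b t) t :=
    ((hφc.neg.rexp.mul hb).integral_hasStrictDerivAt a t).hasDerivAt
  refine ((hφ t).exp.mul hI).congr_deriv ?_
  rw [← mul_assoc, ← exp_add, add_neg_cancel, exp_zero]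
  ring

theorem exists_hasDerivAt_update_eq_mul_add {φ a b : (Fin 2 → ℝ) → ℝ} (i : Fin 2)
    (hφ : ∀ x t, HasDerivAt (fun s => φ (update x i s)) (a (update x i t)) t)
    (hb : Continuous b) :
    ∃ L : (Fin 2 → ℝ) → ℝ, ∀ x, HasDerivAt (fun t => L (update x i t)) (a x * L x + b x) (x i) := by
  refine ⟨fun y => exp (φ y) * ∫ s in (0 : ℝ)..y i, exp (-φ (update y i s)) * b (update y i s),
    fun x => ?_⟩
  have h := hasDerivAt_exp_mul_integral (b := fun s => b (update x i s)) (hφ x) (by fun_prop)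
    0 (x i)
  simpa using h

/-- For any C² function `ρ` and any C¹ function `L₁₂₂`, there exists a function `L₁₂₁`,
differentiable with respect to `x²`, solving the single 2-dimensional Riemann-Lanczos
equation (E1) (no differential gauge condition imposed) everywhere.
Coordinate `xⁱ` corresponds to `i - 1 : Fin 2`. -/
theorem riemann_lanczos_2d_no_gauge_solvable
    (ρ L122 : (Fin 2 → ℝ) → ℝ)
    (hρ : ContDiff ℝ 2 ρ) (hL122 : ContDiff ℝ 1 L122) :
    ∃ L121 : (Fin 2 → ℝ) → ℝ,
      (∀ x : Fin 2 → ℝ,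
        DifferentiableAt ℝ (fun t => L121 (Function.update x 1 t)) (x 1)) ∧
      (∀ x : Fin 2 → ℝ,
        -Real.exp (2 * ρ x) * pd 0 (pd 1 ρ) x + 4 * L121 x * pd 1 ρ x
          - 4 * L122 x * pd 0 ρ x - 2 * pd 1 L121 x + 2 * pd 0 L122 x = 0) := by
  have hρ1 : ContDiff ℝ 1 ρ := hρ.of_le one_le_two
  have hc : Continuous fun y =>
      (-exp (2 * ρ y) * pd 0 (pd 1 ρ) y - 4 * L122 y * pd 0 ρ y + 2 * pd 0 L122 y) / 2 := by
    have := continuous_pd (contDiff_pd_s6 (n := 1) hρ 1) 0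
    have := continuous_pd hρ1 0
    have := continuous_pd hL122 0
    have := hρ1.continuous
    fun_prop
  obtain ⟨L121, hL121⟩ := exists_hasDerivAt_update_eq_mul_add (φ := fun y => 2 * ρ y)
    (a := fun y => 2 * pd 1 ρ y) 1
    (fun x t => (hasDerivAt_update_pd (hρ1.differentiable (by simp)) 1 x t).const_mul 2) hc
  refine ⟨L121, fun x => (hL121 x).differentiableAt, fun x => ?_⟩
  rw [show pd 1 L121 x = _ from (hL121 x).deriv]
  ring
end
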